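/- arXiv:1901.06066 — 2 statements merged into one kernel-verified Lean document; each statement's English description precedes it below -/
import Mathlib

section
/- Let [s_0, ..., s_n] be an admissible list of integers with NCF value v (so v < 0). Then the list [−1, s_0 − 1, s_1, ..., s_n] is also admissible and its NCF value equals v/(1 − v). Consequently, if s > 0 is rational and −1/s is the NCF value of [s_0, ..., s_n], then −1/(s+1) is the NCF value of [−1, s_0 − 1, s_1, ..., s_n], and the associated products agree: |(−1)·((s_0 − 1) + 1)·(s_1 + 1)···(s_n + 1)| = |s_0·(s_1 + 1)···(s_n + 1)|. -/
/-- The negative continued fraction (NCF) value of a list of integers: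
`ncfVal [rₙ] = rₙ` and `ncfVal (rₖ :: l) = rₖ - 1 / ncfVal l`.
(Junk value `0` for the empty list; recall division by zero in `ℚ` is `0`,
so the value is "well defined" precisely when all proper tails have nonzero value.) -/
def ncfVal : List ℤ → ℚ
  | [] => 0
  | [r] => (r : ℚ)
  | r :: s :: l => (r : ℚ) - 1 / ncfVal (s :: l)

/-- A list `[r₀, …, rₙ]` is admissible if `r₀ ≤ -1` and `rᵢ ≤ -2` for `1 ≤ i ≤ n`. -/
def Admissible : List ℤ → Prop
  | [] => False
  | r :: l => r ≤ -1 ∧ ∀ s ∈ l, s ≤ -2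

/-! Lowering the head of a list by one lowers its NCF value `v` by one, and then prepending
`-1` gives `-1 - 1/(v - 1) = v/(1 - v)`; admissibility forces `v < 0`, so `v ≠ 1`. -/

-- For `l = []` this holds through the junk values `ncfVal [] = 0` and `1 / 0 = 0`.
lemma ncfVal_cons (r : ℤ) (l : List ℤ) : ncfVal (r :: l) = r - 1 / ncfVal l := by
  cases l with
  | nil => simp [ncfVal]
  | cons a t => rfl

-- A tail with value `< -1` changes the head by `-1/w ∈ (0, 1)`.
lemma ncfVal_cons_lt_add_one (r : ℤ) {l : List ℤ} (hl : ∀ s ∈ l, s ≤ -2) :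
    ncfVal (r :: l) < r + 1 := by
  induction l generalizing r with
  | nil => simp [ncfVal]
  | cons a t ih =>
    have ha : (a : ℚ) ≤ -2 := by exact_mod_cast hl a List.mem_cons_self
    have htail : ncfVal (a :: t) < -1 :=
      (ih a fun s hs => hl s (List.mem_cons_of_mem a hs)).trans_le (by linarith)
    have hinv : -1 < 1 / ncfVal (a :: t) := by
      rw [lt_div_iff_of_neg (by linarith)]
      linarith
    rw [ncfVal_cons]
    linarith

lemma Admissible.ncfVal_neg {r : ℤ} {l : List ℤ} (h : Admissible (r :: l)) :
    ncfVal (r :: l) < 0 := by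
  have hr : (r : ℚ) ≤ -1 := by exact_mod_cast h.1
  linarith [ncfVal_cons_lt_add_one r h.2]

lemma Admissible.neg_one_cons_sub_one {r : ℤ} {l : List ℤ} (h : Admissible (r :: l)) :
    Admissible ((-1 : ℤ) :: (r - 1) :: l) := by
  refine ⟨le_rfl, fun s hs => ?_⟩
  rcases List.mem_cons.mp hs with rfl | hs
  · linarith [h.1]
  · exact h.2 s hs

lemma ncfVal_sub_one_cons (r : ℤ) (l : List ℤ) :
    ncfVal ((r - 1) :: l) = ncfVal (r :: l) - 1 := by
  rw [ncfVal_cons, ncfVal_cons]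
  push_cast
  ring

lemma ncfVal_neg_one_cons_sub_one {r : ℤ} {l : List ℤ} (h : ncfVal (r :: l) ≠ 1) :
    ncfVal ((-1 : ℤ) :: (r - 1) :: l) = ncfVal (r :: l) / (1 - ncfVal (r :: l)) := by
  have h₁ : ncfVal (r :: l) - 1 ≠ 0 := sub_ne_zero.mpr h
  have h₂ : 1 - ncfVal (r :: l) ≠ 0 := sub_ne_zero.mpr h.symm
  rw [ncfVal_cons, ncfVal_sub_one_cons]
  field_simp
  ring

/-- If `[s₀, …, sₙ]` is admissible with NCF value `v`, then
`[-1, s₀ - 1, s₁, …, sₙ]` is admissible with NCF value `v / (1 - v)`; hence if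
`-1/s` is the value of the first list for a positive rational `s`, then
`-1/(s+1)` is the value of the second list, and the associated weights agree:
`|(-1)·((s₀-1)+1)·(s₁+1)⋯(sₙ+1)| = |s₀·(s₁+1)⋯(sₙ+1)|`. -/
theorem ncf_shift_expansion (s₀ : ℤ) (rest : List ℤ)
    (h : Admissible (s₀ :: rest)) :
    Admissible ((-1 : ℤ) :: (s₀ - 1) :: rest) ∧
    ncfVal ((-1 : ℤ) :: (s₀ - 1) :: rest) =
      ncfVal (s₀ :: rest) / (1 - ncfVal (s₀ :: rest)) ∧
    (∀ s : ℚ, 0 < s → ncfVal (s₀ :: rest) = -1 / s →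
      ncfVal ((-1 : ℤ) :: (s₀ - 1) :: rest) = -1 / (s + 1)) ∧
    |(-1 : ℤ) * ((s₀ - 1) + 1) * (rest.map (· + 1)).prod| =
      |s₀ * (rest.map (· + 1)).prod| := by
  have hval := ncfVal_neg_one_cons_sub_one (h.ncfVal_neg.trans one_pos).ne
  refine ⟨h.neg_one_cons_sub_one, hval, fun s hs hv => ?_, ?_⟩
  · rw [hval, hv, one_sub_div hs.ne', div_div_div_cancel_right₀ hs.ne', sub_neg_eq_add]
  · rw [← abs_neg]
    congr 1
    ring
end

section
/- Let r be a rational number with r < −3. Then r + 3 < 0, and if [r_0, ..., r_n] is the unique admissible NCF expansion of r + 3, then |r_0 (r_1+1) ⋯ (r_n+1)| = Ψ(r). -/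
/-- `ncfWeight [r₀, …, rₙ] = |r₀ (r₁+1) ⋯ (rₙ+1)|`. -/
def ncfWeight : List ℤ → ℤ
  | [] => 0
  | r :: l => |r * (l.map (· + 1)).prod|

/-- The function `Φ` of the paper: for `x = p/q ∈ (0,1]`, `Φ(x)` is the weight
`|r₀ (r₁+1) ⋯ (rₙ+1)|` of the unique admissible list with NCF value `-q/p = -1/x`,
extended to all of `ℚ` by `Φ(r+1) = Φ(r)`; here `x = r - ⌈r⌉ + 1 ∈ (0,1]`. -/
noncomputable def Phi (r : ℚ) : ℤ :=
  letI := Classical.propDecidable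
    (∃ L : List ℤ, Admissible L ∧ ncfVal L = -1 / (r - (⌈r⌉ : ℚ) + 1))
  if h : ∃ L : List ℤ, Admissible L ∧ ncfVal L = -1 / (r - (⌈r⌉ : ℚ) + 1) then
    ncfWeight h.choose
  else 0

/-- The function `Ψ` of the paper. -/
noncomputable def Psi (r : ℚ) : ℤ :=
  if -3 ≤ r then 0 else Phi (-1 / (r + 3))

/-! An admissible expansion of `-1/s` with `s > 1` must be `[-1, b, r₂, …]`, and `[b + 1, r₂, …]`
is then an admissible expansion of `-1/(s - 1)` of the same weight, because the head `-1`
contributes `|-1| = 1` and `b + 1` takes over as the new head. Peeling `⌈s⌉ - 1` times moves `s`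
into `(0, 1]`, where `Φ` is read off the expansion; that expansion is unique because the head of
an admissible list is the floor of its value. -/

lemma ncfVal_cons_cons (a b : ℤ) (l : List ℤ) :
    ncfVal (a :: b :: l) = a - 1 / ncfVal (b :: l) :=
  rfl

lemma ncfVal_cons_add (b n : ℤ) (l : List ℤ) :
    ncfVal ((b + n) :: l) = ncfVal (b :: l) + n := by
  cases l with
  | nil => simp [ncfVal]
  | cons c m => rw [ncfVal_cons_cons, ncfVal_cons_cons]; push_cast; ring

lemma ncfVal_cons_lt (a : ℤ) {M : List ℤ} (hM : ∀ s ∈ M, s ≤ -2) :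
    ncfVal (a :: M) < a + 1 := by
  induction M generalizing a with
  | nil => simp [ncfVal]
  | cons b l ih =>
    have hw : ncfVal (b :: l) < -1 := by
      have hb : (b : ℚ) ≤ -2 := by exact_mod_cast hM b List.mem_cons_self
      linarith [ih b fun s hs => hM s (List.mem_cons_of_mem b hs)]
    have : -1 < 1 / ncfVal (b :: l) := by
      rw [lt_div_iff_of_neg (by linarith)]; linarith
    rw [ncfVal_cons_cons]; linarith

lemma ncfVal_lt_neg_one {b : ℤ} {l : List ℤ} (h : ∀ s ∈ b :: l, s ≤ -2) :
    ncfVal (b :: l) < -1 := by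
  have hb : (b : ℚ) ≤ -2 := by exact_mod_cast h b List.mem_cons_self
  linarith [ncfVal_cons_lt b fun s hs => h s (List.mem_cons_of_mem b hs)]

lemma lt_ncfVal_cons_cons (a : ℤ) {b : ℤ} {l : List ℤ} (h : ∀ s ∈ b :: l, s ≤ -2) :
    (a : ℚ) < ncfVal (a :: b :: l) := by
  have : 1 / ncfVal (b :: l) < 0 := one_div_neg.mpr (by linarith [ncfVal_lt_neg_one h])
  rw [ncfVal_cons_cons]; linarith

lemma floor_ncfVal_cons (a : ℤ) {M : List ℤ} (hM : ∀ s ∈ M, s ≤ -2) :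
    ⌊ncfVal (a :: M)⌋ = a := by
  refine Int.floor_eq_iff.mpr ⟨?_, ncfVal_cons_lt a hM⟩
  cases M with
  | nil => simp [ncfVal]
  | cons b l => exact (lt_ncfVal_cons_cons a hM).le

lemma head_eq_of_ncfVal_cons_eq {a a' : ℤ} {M M' : List ℤ} (hM : ∀ s ∈ M, s ≤ -2)
    (hM' : ∀ s ∈ M', s ≤ -2) (hv : ncfVal (a :: M) = ncfVal (a' :: M')) : a = a' := by
  rw [← floor_ncfVal_cons a hM, hv, floor_ncfVal_cons a' hM']

lemma ncfVal_cons_injective {a a' : ℤ} {M M' : List ℤ} (hM : ∀ s ∈ M, s ≤ -2)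
    (hM' : ∀ s ∈ M', s ≤ -2) (hv : ncfVal (a :: M) = ncfVal (a' :: M')) :
    a = a' ∧ M = M' := by
  induction M generalizing a a' M' with
  | nil =>
    obtain rfl := head_eq_of_ncfVal_cons_eq hM hM' hv
    cases M' with
    | nil => exact ⟨rfl, rfl⟩
    | cons b' l' => exact absurd hv (lt_ncfVal_cons_cons a hM').ne
  | cons b l ih =>
    obtain rfl := head_eq_of_ncfVal_cons_eq hM hM' hv
    cases M' with
    | nil => exact absurd hv.symm (lt_ncfVal_cons_cons a hM).ne
    | cons b' l' =>
      rw [ncfVal_cons_cons, ncfVal_cons_cons, sub_right_inj, one_div, one_div, inv_inj] at hv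
      obtain ⟨rfl, rfl⟩ := ih (fun s hs => hM s (List.mem_cons_of_mem b hs))
        (fun s hs => hM' s (List.mem_cons_of_mem b' hs)) hv
      exact ⟨rfl, rfl⟩

lemma ncfVal_injOn_admissible : Set.InjOn ncfVal {L | Admissible L} := by
  rintro (_ | ⟨a, M⟩) hL (_ | ⟨a', M'⟩) hL' hv
  · rfl
  · exact hL.elim
  · exact hL'.elim
  · obtain ⟨rfl, rfl⟩ := ncfVal_cons_injective hL.2 hL'.2 hv
    rfl

lemma ncfWeight_neg_one_cons (b : ℤ) (l : List ℤ) :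
    ncfWeight ((-1) :: b :: l) = ncfWeight ((b + 1) :: l) := by
  simp [ncfWeight]

lemma exists_admissible_ncfVal_neg_one_div_sub_one {L : List ℤ} {s : ℚ} (hL : Admissible L)
    (hv : ncfVal L = -1 / s) (hs : 1 < s) :
    ∃ L', Admissible L' ∧ ncfVal L' = -1 / (s - 1) ∧ ncfWeight L' = ncfWeight L := by
  obtain _ | ⟨a, M⟩ := L
  · exact hL.elim
  have hlo : -1 < -1 / s := by
    rw [lt_div_iff₀ (by linarith)]; linarith
  have hhi : -1 / s < 0 := div_neg_of_neg_of_pos (by norm_num) (by linarith)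
  have ha : a = -1 := by
    rw [← floor_ncfVal_cons a hL.2, hv, Int.floor_eq_iff]
    constructor <;> push_cast <;> linarith
  subst ha
  obtain _ | ⟨b, l⟩ := M
  · simp [ncfVal] at hv; linarith
  have hw : ncfVal (b :: l) < -1 := ncfVal_lt_neg_one hL.2
  have hb : b ≤ -2 := hL.2 b List.mem_cons_self
  refine ⟨(b + 1) :: l, ⟨by omega, fun t ht => hL.2 t (List.mem_cons_of_mem b ht)⟩, ?_,
    (ncfWeight_neg_one_cons b l).symm⟩
  rw [ncfVal_cons_cons] at hv
  rw [ncfVal_cons_add]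
  have hs1 : s - 1 ≠ 0 := by linarith
  have hw0 : ncfVal (b :: l) ≠ 0 := by linarith
  field_simp at hv ⊢
  push_cast at hv ⊢
  linarith

lemma exists_admissible_ncfVal_neg_one_div_sub_nat (k : ℕ) {L : List ℤ} {s : ℚ}
    (hL : Admissible L) (hv : ncfVal L = -1 / s) (hk : (k : ℚ) < s) :
    ∃ L', Admissible L' ∧ ncfVal L' = -1 / (s - k) ∧ ncfWeight L' = ncfWeight L := by
  induction k with
  | zero => exact ⟨L, hL, by simpa using hv, rfl⟩
  | succ k ih =>
    push_cast at hk
    obtain ⟨L₁, hL₁, hv₁, hw₁⟩ := ih (by linarith)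
    obtain ⟨L', hL', hv', hw'⟩ :=
      exists_admissible_ncfVal_neg_one_div_sub_one hL₁ hv₁ (by linarith)
    exact ⟨L', hL', by rw [hv']; push_cast; ring_nf, hw'.trans hw₁⟩

lemma Phi_eq_ncfWeight {x : ℚ} {L : List ℤ} (hL : Admissible L)
    (hv : ncfVal L = -1 / (x - ⌈x⌉ + 1)) : Phi x = ncfWeight L := by
  have hex : ∃ L : List ℤ, Admissible L ∧ ncfVal L = -1 / (x - ⌈x⌉ + 1) := ⟨L, hL, hv⟩
  rw [Phi, dif_pos hex,
    ncfVal_injOn_admissible hex.choose_spec.1 hL (hex.choose_spec.2.trans hv.symm)]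

lemma Psi_of_lt_neg_three {r : ℚ} (hr : r < -3) : Psi r = Phi (-1 / (r + 3)) :=
  if_neg (by linarith)

/-- For rational `r < -3`, `r + 3 < 0`, and the weight
`|r₀ (r₁+1) ⋯ (rₙ+1)|` of the unique admissible NCF expansion `[r₀, …, rₙ]` of
`r + 3` equals `Ψ(r)`. -/
theorem ncf_weight_eq_psi_of_lt_neg_three (r : ℚ) (hr : r < -3) :
    r + 3 < 0 ∧
    ∀ L : List ℤ, Admissible L → ncfVal L = r + 3 →
      ncfWeight L = Psi r := by
  have h3 : r + 3 < 0 := by linarith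
  refine ⟨h3, fun L hL hv => ?_⟩
  set s : ℚ := -1 / (r + 3) with hs_def
  have hs : 0 < s := div_pos_of_neg_of_neg (by norm_num) h3
  have hvs : ncfVal L = -1 / s := by rw [hv, hs_def]; field_simp
  obtain ⟨k, hk⟩ := Int.eq_ofNat_of_zero_le (by linarith [Int.ceil_pos.mpr hs] : 0 ≤ ⌈s⌉ - 1)
  have hkq : (k : ℚ) = ⌈s⌉ - 1 := by exact_mod_cast hk.symm
  obtain ⟨L', hL', hv', hw⟩ := exists_admissible_ncfVal_neg_one_div_sub_nat k hL hvs
    (by linarith [Int.ceil_lt_add_one s])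
  rw [Psi_of_lt_neg_three hr, Phi_eq_ncfWeight hL' (by rw [hv', hkq]; congr 1; ring), hw]
end
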